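/- arXiv:2107.00250 — 4 statements merged into one kernel-verified Lean document; each statement's English description precedes it below -/
import Mathlib

section
/- Let A be a finite boolean algebra with n atoms, E = {h₁,…,h_m} ⊆ A, and β : E → [0,1]. For h ∈ A, let S_β(h) = {σ(h) : σ a state of A extending β}. Then S_β(h) is either empty or a closed subinterval of [0,1] (possibly a single point). -/
/-- A state of a boolean algebra: a `[0,1]`-valued, normalized, finitely additive
function. -/
def IsState {A : Type*} [BooleanAlgebra A] (σ : A → ℝ) : Prop :=
  (∀ x : A, 0 ≤ σ x ∧ σ x ≤ 1) ∧ σ ⊤ = 1 ∧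
  ∀ x y : A, x ⊓ y = ⊥ → σ (x ⊔ y) = σ x + σ y

theorem stmt_11 (A : Type*) [BooleanAlgebra A] [Fintype A]
    (E : Finset A) (β : A → ℝ) (h : A) :
    let S : Set ℝ := {r : ℝ | ∃ σ : A → ℝ, IsState σ ∧ (∀ e ∈ E, σ e = β e) ∧ σ h = r}
    S = ∅ ∨ ∃ a b : ℝ, a ≤ b ∧ 0 ≤ a ∧ b ≤ 1 ∧ S = Set.Icc a b := by
  intro S
  rcases Set.eq_empty_or_nonempty S with hS | hS
  · exact Or.inl hS
  right
  set K : Set (A → ℝ) := {σ | IsState σ ∧ ∀ e ∈ E, σ e = β e} with hK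
  have hSK : S = (fun σ : A → ℝ => σ h) '' K := by
    ext r
    constructor
    · rintro ⟨σ, h1, h2, h3⟩; exact ⟨σ, ⟨h1, h2⟩, h3⟩
    · rintro ⟨σ, ⟨h1, h2⟩, h3⟩; exact ⟨σ, h1, h2, h3⟩
  -- K is compact
  have hKsub : K ⊆ Set.pi Set.univ (fun _ : A => Set.Icc (0:ℝ) 1) := by
    rintro σ ⟨⟨hb, _, _⟩, _⟩ x _
    exact hb x
  have hKclosed : IsClosed K := by
    have h1 : IsClosed {σ : A → ℝ | ∀ x : A, 0 ≤ σ x ∧ σ x ≤ 1} := by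
      have : {σ : A → ℝ | ∀ x : A, 0 ≤ σ x ∧ σ x ≤ 1} =
          ⋂ x : A, {σ : A → ℝ | σ x ∈ Set.Icc (0:ℝ) 1} := by
        ext σ; simp [Set.mem_Icc]
      rw [this]
      exact isClosed_iInter fun x =>
        (isClosed_Icc).preimage (continuous_apply x)
    have h2 : IsClosed {σ : A → ℝ | σ ⊤ = 1} :=
      isClosed_eq (continuous_apply ⊤) continuous_const
    have h3 : IsClosed {σ : A → ℝ | ∀ x y : A, x ⊓ y = ⊥ → σ (x ⊔ y) = σ x + σ y} := by
      have : {σ : A → ℝ | ∀ x y : A, x ⊓ y = ⊥ → σ (x ⊔ y) = σ x + σ y} =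
          ⋂ (x : A) (y : A) (_ : x ⊓ y = ⊥), {σ : A → ℝ | σ (x ⊔ y) = σ x + σ y} := by
        ext σ; simp
      rw [this]
      exact isClosed_iInter fun x => isClosed_iInter fun y => isClosed_iInter fun _ =>
        isClosed_eq (continuous_apply _) ((continuous_apply x).add (continuous_apply y))
    have h4 : IsClosed {σ : A → ℝ | ∀ e ∈ E, σ e = β e} := by
      have : {σ : A → ℝ | ∀ e ∈ E, σ e = β e} =
          ⋂ (e : A) (_ : e ∈ E), {σ : A → ℝ | σ e = β e} := by
        ext σ; simp
      rw [this]
      exact isClosed_iInter fun e => isClosed_iInter fun _ =>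
        isClosed_eq (continuous_apply e) continuous_const
    have : K = ({σ : A → ℝ | ∀ x : A, 0 ≤ σ x ∧ σ x ≤ 1} ∩ {σ | σ ⊤ = 1} ∩
        {σ | ∀ x y : A, x ⊓ y = ⊥ → σ (x ⊔ y) = σ x + σ y}) ∩
        {σ | ∀ e ∈ E, σ e = β e} := by
      ext σ
      simp only [hK, Set.mem_setOf_eq, Set.mem_inter_iff, IsState]
      tauto
    rw [this]
    exact ((h1.inter h2).inter h3).inter h4
  have hKcompact : IsCompact K :=
    (isCompact_univ_pi fun _ => isCompact_Icc).of_isClosed_subset hKclosed hKsub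
  -- K is convex
  have hKconvex : Convex ℝ K := by
    rintro σ ⟨⟨hσb, hσt, hσa⟩, hσE⟩ τ ⟨⟨hτb, hτt, hτa⟩, hτE⟩ s t hs ht hst
    refine ⟨⟨fun x => ?_, ?_, fun x y hxy => ?_⟩, fun e he => ?_⟩
    · constructor
      · have := (hσb x).1; have := (hτb x).1
        simp only [Pi.add_apply, Pi.smul_apply, smul_eq_mul]
        positivity
      · have h1 := (hσb x).2; have h2 := (hτb x).2
        simp only [Pi.add_apply, Pi.smul_apply, smul_eq_mul]
        nlinarith
    · simp only [Pi.add_apply, Pi.smul_apply, smul_eq_mul, hσt, hτt]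
      linarith
    · simp only [Pi.add_apply, Pi.smul_apply, smul_eq_mul, hσa x y hxy, hτa x y hxy]
      ring
    · simp only [Pi.add_apply, Pi.smul_apply, smul_eq_mul, hσE e he, hτE e he]
      linear_combination (β e) * hst
  -- S is compact and connected
  have hScompact : IsCompact S := by
    rw [hSK]
    exact hKcompact.image (continuous_apply h)
  have hSconvex : Convex ℝ S := by
    rw [hSK]
    exact hKconvex.linear_image ((LinearMap.proj h : (A → ℝ) →ₗ[ℝ] ℝ))
  have hSconn : IsConnected S := ⟨hS, hSconvex.isPreconnected⟩
  have hSeq := eq_Icc_of_connected_compact hSconn hScompact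
  refine ⟨sInf S, sSup S, ?_, ?_, ?_, hSeq⟩
  · obtain ⟨r, hr⟩ := hS
    exact le_trans (csInf_le hScompact.bddBelow hr) (le_csSup hScompact.bddAbove hr)
  · have : ∀ x ∈ S, (0:ℝ) ≤ x := by
      rintro x ⟨σ, ⟨hb, _, _⟩, _, hx⟩
      exact hx ▸ (hb h).1
    exact le_csInf hS this
  · have : ∀ x ∈ S, x ≤ (1:ℝ) := by
      rintro x ⟨σ, ⟨hb, _, _⟩, _, hx⟩
      exact hx ▸ (hb h).2
    exact csSup_le hS this
end

section
/- (Gordan's theorem) For any real n × m matrix M, exactly one of the following holds: (i) there is s ∈ ℝ^m such that every coordinate of Ms is strictly negative; (ii) there is a nonzero u ∈ ℝⁿ with all coordinates nonnegative and uᵀM = 0. -/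
/-!
Either `0 = uᵀM` for some `u` in the standard simplex, which is alternative (ii), or the compact
convex set `{uᵀM | u ∈ Δ}` is strictly separated from `0` by a functional `x ↦ v ⬝ᵥ x`. That
functional is positive on every row of `M`, so `s = -v` gives alternative (i). The two cannot hold
together, since `uᵀ(Ms) = (uᵀM)s` would be both negative and zero.
-/

open Matrix

section

variable {R : Type*} [CommRing R] [PartialOrder R] [IsStrictOrderedRing R]
  {ι : Type*} [Fintype ι]

theorem dotProduct_neg_of_nonneg_of_ne_zero {u v : ι → R} (hu : 0 ≤ u) (hu0 : u ≠ 0)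
    (hv : ∀ i, v i < 0) : u ⬝ᵥ v < 0 := by
  obtain ⟨i, hi⟩ := Function.ne_iff.mp hu0
  have hui : 0 < u i := (hu i).lt_of_ne' hi
  exact Finset.sum_neg' (fun j _ ↦ mul_nonpos_of_nonneg_of_nonpos (hu j) (hv j).le)
    ⟨i, Finset.mem_univ i, mul_neg_of_pos_of_neg hui (hv i)⟩

theorem Matrix.not_exists_mulVec_neg_and_nonneg_vecMul_eq_zero {κ : Type*} [Fintype κ]
    (M : Matrix ι κ R) :
    ¬((∃ s, ∀ i, (M *ᵥ s) i < 0) ∧ ∃ u : ι → R, u ≠ 0 ∧ 0 ≤ u ∧ u ᵥ* M = 0) := by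
  rintro ⟨⟨s, hs⟩, u, hu0, hu, huM⟩
  have := dotProduct_neg_of_nonneg_of_ne_zero hu hu0 hs
  rw [dotProduct_mulVec, huM, zero_dotProduct] at this
  exact this.false

end

theorem Matrix.exists_mulVec_neg_of_zero_notMem_image_stdSimplex {ι κ : Type*}
    [Fintype ι] [Fintype κ] (M : Matrix ι κ ℝ)
    (h : (0 : κ → ℝ) ∉ (· ᵥ* M) '' stdSimplex ℝ ι) : ∃ s, ∀ i, (M *ᵥ s) i < 0 := by
  classical
  have hconvex : Convex ℝ ((· ᵥ* M) '' stdSimplex ℝ ι) :=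
    (convex_stdSimplex ℝ ι).linear_image (vecMulLinear M)
  have hclosed : IsClosed ((· ᵥ* M) '' stdSimplex ℝ ι) :=
    ((isCompact_stdSimplex ℝ ι).image (by fun_prop)).isClosed
  obtain ⟨f, c, hf0, hf⟩ := geometric_hahn_banach_point_closed hconvex hclosed h
  set v := (dotProductEquiv ℝ κ).symm f.toLinearMap
  have hv (x : κ → ℝ) : f x = v ⬝ᵥ x :=
    (LinearMap.congr_fun ((dotProductEquiv ℝ κ).apply_symm_apply f.toLinearMap) x).symm
  refine ⟨-v, fun i ↦ ?_⟩
  have hrow : c < f (M i) :=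
    hf _ ⟨Pi.single i 1, single_mem_stdSimplex ℝ i, single_one_vecMul _ _⟩
  rw [map_zero] at hf0
  rw [mulVec_neg, Pi.neg_apply, mulVec, dotProduct_comm, ← hv]
  linarith

theorem stmt_13 (n m : ℕ) (M : Matrix (Fin n) (Fin m) ℝ) :
    Xor' (∃ s : Fin m → ℝ, ∀ i : Fin n, M.mulVec s i < 0)
         (∃ u : Fin n → ℝ, u ≠ 0 ∧ (∀ i, 0 ≤ u i) ∧ Matrix.vecMul u M = 0) := by
  refine (xor_iff_or_and_not_and _ _).mpr ⟨?_, M.not_exists_mulVec_neg_and_nonneg_vecMul_eq_zero⟩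
  by_cases h0 : (0 : Fin m → ℝ) ∈ (· ᵥ* M) '' stdSimplex ℝ (Fin n)
  · obtain ⟨u, ⟨hu, hu1⟩, huM⟩ := h0
    exact Or.inr ⟨u, fun h ↦ by simp [h] at hu1, hu, huM⟩
  · exact Or.inl (M.exists_mulVec_neg_of_zero_notMem_image_stdSimplex h0)
end

section
/- (Hyperplane separation for a subspace and the negative octant) Let O = {v ∈ ℝⁿ : every coordinate of v is < 0} and let R be a linear subspace of ℝⁿ disjoint from O. Then there exists a nonzero u ∈ ℝⁿ such that uᵀr = 0 for all r ∈ R and uᵀy < 0 for all y ∈ O. -/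
theorem stmt_14 (n : ℕ) (R : Submodule ℝ (Fin n → ℝ))
    (hdisj : ∀ r ∈ R, ¬ ∀ i : Fin n, r i < 0) :
    ∃ u : Fin n → ℝ, u ≠ 0 ∧ (∀ r ∈ R, ∑ i : Fin n, u i * r i = 0) ∧
      ∀ y : Fin n → ℝ, (∀ i, y i < 0) → ∑ i : Fin n, u i * y i < 0 := by
  rcases Nat.eq_zero_or_pos n with hn | hn
  · subst hn
    exact (hdisj 0 R.zero_mem (fun i => i.elim0)).elim
  set O : Set (Fin n → ℝ) := {v | ∀ i, v i < 0} with hO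
  have hOopen : IsOpen O := by
    have : O = Set.pi Set.univ (fun _ : Fin n => Set.Iio (0:ℝ)) := by
      ext v; simp [hO, Set.mem_pi]
    rw [this]
    exact isOpen_set_pi Set.finite_univ (fun i _ => isOpen_Iio)
  have hOconv : Convex ℝ O := by
    intro x hx y hy a b ha hb hab i
    simp only [Pi.add_apply, Pi.smul_apply, smul_eq_mul]
    rcases eq_or_lt_of_le ha with rfl | ha'
    · have hb1 : b = 1 := by linarith
      simpa [hb1] using hy i
    · have h1 : a * x i < 0 := mul_neg_of_pos_of_neg ha' (hx i)
      have h2 : b * y i ≤ 0 := mul_nonpos_of_nonneg_of_nonpos hb (hy i).le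
      linarith
  have hdis : Disjoint O (R : Set (Fin n → ℝ)) := by
    rw [Set.disjoint_left]
    intro v hv hvR
    exact hdisj v hvR hv
  obtain ⟨f, c, hfc, hcf⟩ := geometric_hahn_banach_open hOconv hOopen R.convex hdis
  have hc0 : c ≤ 0 := by simpa using hcf 0 R.zero_mem
  have hfR : ∀ r ∈ R, f r = 0 := by
    intro r hr
    by_contra hne
    have : c ≤ ((c - 1) / f r) * f r := by
      have := hcf (((c - 1) / f r) • r) (R.smul_mem _ hr)
      simpa using this
    rw [div_mul_cancel₀ _ hne] at this
    linarith
  have key : ∀ y : Fin n → ℝ, f y = ∑ i, f (Pi.single i 1) * y i := by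
    intro y
    conv_lhs => rw [pi_eq_sum_univ y, map_sum]
    refine Finset.sum_congr rfl fun i _ => ?_
    rw [map_smul]
    simp only [smul_eq_mul]
    rw [show (fun j => if i = j then (1:ℝ) else 0) = Pi.single i 1 by
      ext j; simp [Pi.single_apply, eq_comm]]
    ring
  refine ⟨fun i => f (Pi.single i 1), ?_, ?_, ?_⟩
  · have hmem : (fun _ : Fin n => (-1:ℝ)) ∈ O := fun i => by norm_num
    have hneg : f (fun _ : Fin n => (-1:ℝ)) < 0 := lt_of_lt_of_le (hfc _ hmem) hc0
    intro h0
    rw [key] at hneg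
    have hz : ∑ i : Fin n, f (Pi.single i 1) * (-1:ℝ) = 0 :=
      Finset.sum_eq_zero fun i _ => by
        have h := congrFun h0 i
        simp only [Pi.zero_apply] at h
        rw [h]; ring
    linarith [hz ▸ hneg]
  · intro r hr
    rw [← key r]
    exact hfR r hr
  · intro y hy
    rw [← key y]
    exact lt_of_lt_of_le (hfc y hy) hc0
end

section
/- (De Finetti's consistency/Dutch book theorem, finite case) Let A be a finite boolean algebra with homomorphisms η₁,…,ηₙ into {0,1} (one per atom), E = {h₁,…,h_m} ⊆ A, and β : E → [0,1]. Then exactly one of the following holds: (i) there is a function s : E → ℝ such that Σⱼ s(hⱼ)(β(hⱼ) − ηᵢ(hⱼ)) < 0 for every i = 1,…,n; (ii) β extends to a state of A. Equivalently, β is consistent (no such s exists) iff β extends to a state of A. -/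
/-- `f` is a homomorphism of boolean algebras. -/
def IsBAHom {A B : Type*} [BooleanAlgebra A] [BooleanAlgebra B] (f : A → B) : Prop :=
  (∀ x : A, f xᶜ = (f x)ᶜ) ∧ (∀ x y : A, f (x ⊓ y) = f x ⊓ f y) ∧
  (∀ x y : A, f (x ⊔ y) = f x ⊔ f y)

/-!
A state of a finite boolean algebra is the mixture, with weights `σ a`, of the point masses
`x ↦ [a ≤ x]` at the atoms `a`; these are exactly the homomorphisms to `{0,1}`, so the states
are the convex hull of the homomorphisms. Hence `β` extends to a state iff `β|E` lies in the
convex hull of the finitely many points `η|E`, and by Hahn–Banach this fails iff some linear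
functional `s` on `ℝ^E` strictly separates `β|E` from all of them, which is the Dutch book (i).
-/

open Finset

theorem exists_sum_mul_sub_neg_iff {α : Type*} (E : Finset α) {S : Set (α → ℝ)}
    (hS : S.Finite) (p : α → ℝ) :
    (∃ s : α → ℝ, ∀ v ∈ S, ∑ i ∈ E, s i * (p i - v i) < 0) ↔
      ¬ ∃ q ∈ convexHull ℝ S, ∀ i ∈ E, q i = p i := by
  classical
  constructor
  · rintro ⟨s, hs⟩ ⟨q, hq, hqp⟩
    have hconv : Convex ℝ {v : α → ℝ | ∑ i ∈ E, s i * (p i - v i) < 0} := by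
      have hlin : IsLinearMap ℝ fun v : α → ℝ => ∑ i ∈ E, s i * v i :=
        ⟨fun v w => by simp only [Pi.add_apply, mul_add, sum_add_distrib],
          fun c v => by simp only [Pi.smul_apply, smul_eq_mul, mul_sum, mul_left_comm]⟩
      simpa only [← sub_neg (a := ∑ i ∈ E, s i * p i), ← sum_sub_distrib, ← mul_sub] using
        convex_halfSpace_gt hlin (∑ i ∈ E, s i * p i)
    have hqneg : ∑ i ∈ E, s i * (p i - q i) < 0 := convexHull_min hs hconv hq
    rw [sum_eq_zero fun i hi => by rw [hqp i hi, sub_self, mul_zero]] at hqneg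
    exact hqneg.false
  · intro hno
    let R : (α → ℝ) →ₗ[ℝ] (E → ℝ) := LinearMap.funLeft ℝ ℝ Subtype.val
    have hRp : R p ∉ convexHull ℝ (R '' S) := by
      rw [← R.image_convexHull]
      rintro ⟨q, hq, hqp⟩
      exact hno ⟨q, hq, fun i hi => congrFun hqp ⟨i, hi⟩⟩
    obtain ⟨f, u, hfp, hfS⟩ := geometric_hahn_banach_point_closed (convex_convexHull ℝ _)
      ((hS.image R).isClosed_convexHull ℝ) hRp
    have hf : ∀ w, f (R w) = ∑ i ∈ E, w i * f (R (Pi.single i 1)) := by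
      intro w
      have hRw : R w = ∑ i ∈ E, w i • R (Pi.single i 1) := by
        ext ⟨j, hj⟩
        simp [R, Finset.sum_apply, Pi.single_apply, hj]
      rw [hRw, map_sum]
      simp only [map_smul, smul_eq_mul]
    refine ⟨fun i => f (R (Pi.single i 1)), fun v hv => ?_⟩
    have hfv := hfS _ (subset_convexHull ℝ _ (Set.mem_image_of_mem R hv))
    calc ∑ i ∈ E, f (R (Pi.single i 1)) * (p i - v i) = f (R p) - f (R v) := by
          rw [hf p, hf v, ← sum_sub_distrib]
          exact sum_congr rfl fun i _ => by ring
      _ < 0 := by linarith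

section BooleanAlgebra

variable {A : Type*} [BooleanAlgebra A]

def boolIndicator (η : A → Bool) (x : A) : ℝ := if η x then 1 else 0

theorem IsBAHom.map_bot {η : A → Bool} (hη : IsBAHom η) : η ⊥ = false := by
  have h := hη.2.1 ⊤ ⊤ᶜ
  rwa [inf_compl_eq_bot, hη.1, inf_compl_eq_bot] at h

theorem IsBAHom.map_top {η : A → Bool} (hη : IsBAHom η) : η ⊤ = true := by
  simpa [hη.map_bot] using hη.1 ⊥

theorem IsState.map_bot {σ : A → ℝ} (hσ : IsState σ) : σ ⊥ = 0 := by
  simpa using hσ.2.2 ⊥ ⊥ (inf_idem ⊥)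

theorem IsBAHom.isState_boolIndicator {η : A → Bool} (hη : IsBAHom η) :
    IsState (boolIndicator η) := by
  refine ⟨fun x => ?_, by simp [boolIndicator, hη.map_top], fun x y hxy => ?_⟩
  · unfold boolIndicator; split <;> norm_num
  · have hdisj : η x ⊓ η y = false := by rw [← hη.2.1, hxy, hη.map_bot]
    have hsup := hη.2.2 x y
    unfold boolIndicator
    cases hx : η x <;> cases hy : η y <;> simp_all

theorem convex_setOf_isState : Convex ℝ {σ : A → ℝ | IsState σ} := by
  rintro σ ⟨hσ, hσ1, hσadd⟩ τ ⟨hτ, hτ1, hτadd⟩ a b ha hb hab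
  refine ⟨fun x => ⟨?_, ?_⟩, ?_, fun x y hxy => ?_⟩
  · simp only [Pi.add_apply, Pi.smul_apply, smul_eq_mul]
    nlinarith [hσ x, hτ x]
  · simp only [Pi.add_apply, Pi.smul_apply, smul_eq_mul]
    nlinarith [hσ x, hτ x]
  · simp [hσ1, hτ1, hab]
  · simp only [Pi.add_apply, Pi.smul_apply, smul_eq_mul, hσadd x y hxy, hτadd x y hxy]
    ring

theorem IsAtom.isBAHom_decide_le [DecidableLE A] {a : A} (ha : IsAtom a) :
    IsBAHom fun x => decide (a ≤ x) := by
  have hcompl : ∀ x, a ≤ xᶜ ↔ ¬ a ≤ x := fun x =>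
    le_compl_iff_disjoint_right.trans ha.not_le_iff_disjoint.symm
  have hsup : ∀ x y, a ≤ x ⊔ y ↔ a ≤ x ∨ a ≤ y := fun x y => by
    simp only [← not_iff_not, not_or, ha.not_le_iff_disjoint, disjoint_sup_right]
  refine ⟨fun x => ?_, fun x y => ?_, fun x y => ?_⟩
  · simp [hcompl]
  · simp [le_inf_iff]
  · simp [hsup]

theorem IsState.map_finset_sup {σ : A → ℝ} (hσ : IsState σ) {s : Finset A}
    (hs : (s : Set A).PairwiseDisjoint id) : σ (s.sup id) = ∑ a ∈ s, σ a := by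
  classical
  induction s using Finset.induction_on with
  | empty => simpa using hσ.map_bot
  | insert a s has ih =>
    rw [coe_insert, Set.pairwiseDisjoint_insert_of_notMem (by simpa)] at hs
    rw [sup_insert, sum_insert has, id, hσ.2.2 _ _ ?_, ih hs.1]
    exact disjoint_iff.mp (Finset.disjoint_sup_right.mpr hs.2)

theorem sup_filter_isAtom_le_eq [Fintype A] [DecidablePred (IsAtom : A → Prop)] [DecidableLE A]
    (x : A) : (univ.filter fun a => IsAtom a ∧ a ≤ x).sup id = x := by
  set y := (univ.filter fun a => IsAtom a ∧ a ≤ x).sup id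
  have hyx : y ≤ x := Finset.sup_le fun a ha => (mem_filter.mp ha).2.2
  refine le_antisymm hyx (sdiff_eq_bot_iff.mp ?_)
  by_contra hne
  obtain ⟨a, ha, hax⟩ := (eq_bot_or_exists_atom_le (x \ y)).resolve_left hne
  have hay : a ≤ y := le_sup (f := id) (mem_filter.mpr ⟨mem_univ a, ha, hax.trans sdiff_le⟩)
  exact ha.not_le_iff_disjoint.mpr (disjoint_sdiff_self_left.mono_left hax) hay

theorem IsState.eq_sum_atoms_le [Fintype A] [DecidablePred (IsAtom : A → Prop)] [DecidableLE A]
    {σ : A → ℝ} (hσ : IsState σ) (x : A) :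
    σ x = ∑ a ∈ univ.filter (fun a => IsAtom a ∧ a ≤ x), σ a := by
  conv_lhs => rw [← sup_filter_isAtom_le_eq x]
  exact hσ.map_finset_sup fun a ha b hb hab =>
    (mem_filter.mp ha).2.1.disjoint_of_ne (mem_filter.mp hb).2.1 hab

theorem isState_iff_mem_convexHull [Fintype A] {σ : A → ℝ} :
    IsState σ ↔ σ ∈ convexHull ℝ (boolIndicator '' {η | IsBAHom η}) := by
  classical
  refine ⟨fun hσ => ?_, fun h => convexHull_min
    (Set.image_subset_iff.mpr fun η hη => hη.isState_boolIndicator) convex_setOf_isState h⟩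
  have hσ_eq : σ = ∑ a ∈ univ.filter IsAtom, σ a • boolIndicator fun x => decide (a ≤ x) := by
    ext x
    rw [hσ.eq_sum_atoms_le x, ← filter_filter, sum_filter, Finset.sum_apply]
    simp [boolIndicator]
  have hmass : ∑ a ∈ univ.filter IsAtom, σ a = 1 := by
    simpa [hσ.2.1] using (hσ.eq_sum_atoms_le ⊤).symm
  rw [hσ_eq]
  exact (convex_convexHull ℝ _).sum_mem (fun a _ => (hσ.1 a).1) hmass fun a ha =>
    subset_convexHull ℝ _ ⟨_, (mem_filter.mp ha).2.isBAHom_decide_le, rfl⟩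

end BooleanAlgebra

theorem stmt_17_general (A : Type*) [BooleanAlgebra A] [Fintype A]
    (E : Finset A) (β : A → ℝ) :
    Xor'
      (∃ s : A → ℝ, ∀ η : A → Bool, IsBAHom η →
        ∑ h ∈ E, s h * (β h - (if η h then 1 else 0)) < 0)
      (∃ σ : A → ℝ, IsState σ ∧ ∀ h ∈ E, σ h = β h) := by
  refine xor_iff_iff_not.mpr ?_
  simpa only [Set.forall_mem_image, Set.mem_ofPred_eq, boolIndicator,
    isState_iff_mem_convexHull] using
    exists_sum_mul_sub_neg_iff E (Set.toFinite (boolIndicator '' {η : A → Bool | IsBAHom η})) β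

theorem stmt_17 (A : Type*) [BooleanAlgebra A] [Fintype A] [Nontrivial A]
    (E : Finset A) (β : A → ℝ) (hβ : ∀ h ∈ E, 0 ≤ β h ∧ β h ≤ 1) :
    Xor'
      (∃ s : A → ℝ, ∀ η : A → Bool, IsBAHom η →
        ∑ h ∈ E, s h * (β h - (if η h then 1 else 0)) < 0)
      (∃ σ : A → ℝ, IsState σ ∧ ∀ h ∈ E, σ h = β h) :=
  stmt_17_general A E β
end
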